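/- arXiv:1509.01154 — 3 statements merged into one kernel-verified Lean document; each statement's English description precedes it below -/
import Mathlib

section
/- Let X be a γ-rough path with p = ⌊1/γ⌋ and let Y = (Y^(0),…,Y^(p−1)) be a path controlled by X, i.e. the remainders Y^(k)♯_{s,t} := Y^(k)_t − ∑_{n=k}^{p−1} Y^(n)_s X^(n−k)_{s,t} satisfy |Y^(k)♯_{s,t}| ≤ M|t−s|^{(p−k)γ}. Define Ξ_{s,t} := ∑_{n=1}^{p} Y^(n−1)_s X^(n)_{s,t}. Then for all s ≤ u ≤ t, δΞ_{s,u,t} = −∑_{k=1}^{p} Y^(k−1)♯_{s,u} X^(k)_{u,t}, and consequently |δΞ_{s,u,t}| ≤ C|t−s|^{(p+1)γ} for some constant C depending on M and the rough path norms. -/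
/-!
By Chen's relation, `X^(n)_{s,t} - X^(n)_{s,u} = ∑_{k=1}^n X^(n-k)_{s,u} X^(k)_{u,t}`. Summing
against `Y^(n-1)_s` and exchanging the order of summation, the coefficient of `X^(k)_{u,t}` in
`δΞ_{s,u,t}` is `∑_{n ≥ k} Y^(n-1)_s X^(n-k)_{s,u} - Y^(k-1)_u = -Y^(k-1)♯_{s,u}`. Each product
`Y^(k-1)♯_{s,u} X^(k)_{u,t}` is then of order `|t-s|^{(p-k+1)γ + kγ} = |t-s|^{(p+1)γ}`.
-/

open Finset

section Germ

variable {R τ : Type*} [CommRing R]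

/-- `germ p Y X` is the paper's `Ξ`, and `remainder p Y X k` its `Y^(k)♯`. -/
def germ (p : ℕ) (Y : ℕ → τ → R) (X : ℕ → τ → τ → R) (s t : τ) : R :=
  ∑ n ∈ Icc 1 p, Y (n - 1) s * X n s t

def remainder (p : ℕ) (Y : ℕ → τ → R) (X : ℕ → τ → τ → R) (k : ℕ) (s t : τ) : R :=
  Y k t - ∑ n ∈ Icc k (p - 1), Y n s * X (n - k) s t

theorem sub_eq_sum_Icc_of_eq_sum_range {a b c : ℕ → R} {n : ℕ} (hc : c 0 = 1)
    (h : a n = ∑ k ∈ range (n + 1), b (n - k) * c k) :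
    a n - b n = ∑ k ∈ Icc 1 n, b (n - k) * c k := by
  rw [h, range_eq_Ico, sum_eq_sum_Ico_succ_bot (by omega), zero_add, Ico_add_one_right_eq_Icc, hc,
    Nat.sub_zero]
  ring

theorem sum_Icc_comp_sub_one (f : ℕ → R) {k p : ℕ} (hk : 1 ≤ k) (hp : 1 ≤ p) :
    ∑ n ∈ Icc k p, f (n - 1) = ∑ m ∈ Icc (k - 1) (p - 1), f m := by
  apply sum_nbij' (· - 1) (· + 1) <;> intro n hn <;> simp_all only [mem_Icc] <;> omega

theorem germ_sub_germ_sub_germ {p : ℕ} {Y : ℕ → τ → R} {X : ℕ → τ → τ → R} {s u t : τ}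
    (hX0 : X 0 u t = 1)
    (hChen : ∀ n ≤ p, X n s t = ∑ k ∈ range (n + 1), X (n - k) s u * X k u t) :
    germ p Y X s t - germ p Y X s u - germ p Y X u t =
      -∑ k ∈ Icc 1 p, remainder p Y X (k - 1) s u * X k u t := by
  have hincr : ∑ n ∈ Icc 1 p, Y (n - 1) s * (X n s t - X n s u) =
      ∑ k ∈ Icc 1 p, (∑ n ∈ Icc k p, Y (n - 1) s * X (n - k) s u) * X k u t := by
    calc _ = ∑ n ∈ Icc 1 p, ∑ k ∈ Icc 1 n, Y (n - 1) s * X (n - k) s u * X k u t := by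
          refine sum_congr rfl fun n hn => ?_
          rw [sub_eq_sum_Icc_of_eq_sum_range (a := (X · s t)) (b := (X · s u)) hX0
            (hChen n (mem_Icc.1 hn).2), mul_sum]
          simp only [mul_assoc]
      _ = ∑ k ∈ Icc 1 p, ∑ n ∈ Icc k p, Y (n - 1) s * X (n - k) s u * X k u t :=
          sum_comm' fun n k => by simp only [mem_Icc]; omega
      _ = _ := by simp only [sum_mul]
  have hshift : ∀ k ∈ Icc 1 p, ∑ n ∈ Icc k p, Y (n - 1) s * X (n - k) s u =
      ∑ m ∈ Icc (k - 1) (p - 1), Y m s * X (m - (k - 1)) s u := by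
    intro k hk
    obtain ⟨hk1, hkp⟩ := mem_Icc.1 hk
    rw [← sum_Icc_comp_sub_one (fun m => Y m s * X (m - (k - 1)) s u) hk1 (hk1.trans hkp)]
    exact sum_congr rfl fun n _ => by rw [Nat.sub_sub_sub_cancel_right hk1]
  calc _ = ∑ n ∈ Icc 1 p, Y (n - 1) s * (X n s t - X n s u) -
        ∑ k ∈ Icc 1 p, Y (k - 1) u * X k u t := by
        simp only [germ, mul_sub, sum_sub_distrib]
    _ = _ := by
        rw [hincr, ← sum_sub_distrib, ← sum_neg_distrib]
        refine sum_congr rfl fun k hk => ?_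
        rw [remainder, hshift k hk]
        ring

end Germ

theorem rpow_mul_rpow_le_rpow_add {s u t a b : ℝ} (hsu : s ≤ u) (hut : u ≤ t) (ha : 0 ≤ a)
    (hb : 0 ≤ b) : (u - s) ^ a * (t - u) ^ b ≤ (t - s) ^ (a + b) := by
  rw [Real.rpow_add_of_nonneg (by linarith) ha hb]
  exact mul_le_mul (by gcongr) (by gcongr)
    (Real.rpow_nonneg (by linarith) b) (Real.rpow_nonneg (by linarith) a)

theorem abs_mul_le_of_le_rpow {A B M C s u t a b : ℝ} (hsu : s ≤ u) (hut : u ≤ t) (ha : 0 ≤ a)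
    (hb : 0 ≤ b) (hA : |A| ≤ M * (u - s) ^ a) (hB : |B| ≤ C * (t - u) ^ b) :
    |A * B| ≤ |M| * |C| * (t - s) ^ (a + b) := by
  have hA' : |A| ≤ |M| * (u - s) ^ a :=
    hA.trans (mul_le_mul_of_nonneg_right (le_abs_self M) (Real.rpow_nonneg (by linarith) a))
  have hB' : |B| ≤ |C| * (t - u) ^ b :=
    hB.trans (mul_le_mul_of_nonneg_right (le_abs_self C) (Real.rpow_nonneg (by linarith) b))
  calc |A * B| ≤ (|M| * (u - s) ^ a) * (|C| * (t - u) ^ b) := by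
        rw [abs_mul]; exact mul_le_mul hA' hB' (abs_nonneg B) (hA'.trans' (abs_nonneg A))
    _ = |M| * |C| * ((u - s) ^ a * (t - u) ^ b) := by ring
    _ ≤ |M| * |C| * (t - s) ^ (a + b) := by
        gcongr; exact rpow_mul_rpow_le_rpow_add hsu hut ha hb

theorem abs_sum_mul_le_rpow {p : ℕ} {γ M C s u t : ℝ} (hγ : 0 ≤ γ) (hsu : s ≤ u) (hut : u ≤ t)
    {A B : ℕ → ℝ} (hA : ∀ k ∈ Icc 1 p, |A (k - 1)| ≤ M * (u - s) ^ (((p : ℝ) - (k - 1 : ℕ)) * γ))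
    (hB : ∀ k ∈ Icc 1 p, |B k| ≤ C * (t - u) ^ ((k : ℝ) * γ)) :
    |∑ k ∈ Icc 1 p, A (k - 1) * B k| ≤ p * (|M| * |C|) * (t - s) ^ (((p : ℝ) + 1) * γ) := by
  have hterm : ∀ k ∈ Icc 1 p, |A (k - 1) * B k| ≤ |M| * |C| * (t - s) ^ (((p : ℝ) + 1) * γ) := by
    intro k hk
    obtain ⟨hk1, hkp⟩ := mem_Icc.1 hk
    have hexp : ((p : ℝ) - (k - 1 : ℕ)) * γ + (k : ℝ) * γ = ((p : ℝ) + 1) * γ := by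
      rw [Nat.cast_sub hk1]; push_cast; ring
    have hpk : (0 : ℝ) ≤ (p : ℝ) - (k - 1 : ℕ) := sub_nonneg.2 (by exact_mod_cast by omega)
    rw [← hexp]
    exact abs_mul_le_of_le_rpow hsu hut (mul_nonneg hpk hγ) (by positivity) (hA k hk) (hB k hk)
  calc _ ≤ ∑ k ∈ Icc 1 p, |A (k - 1) * B k| := abs_sum_le_sum_abs _ _
    _ ≤ ∑ _k ∈ Icc 1 p, |M| * |C| * (t - s) ^ (((p : ℝ) + 1) * γ) := sum_le_sum hterm
    _ = _ := by simp [mul_assoc]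

theorem stmt3_general (T γ : ℝ) (hγ : γ ∈ Set.Ioo (0:ℝ) 1)
    (p : ℕ)
    (X : ℕ → ℝ → ℝ → ℝ) (CX : ℝ)
    (hX0 : ∀ s t, X 0 s t = 1)
    (hChen : ∀ n, n ≤ p → ∀ s u t, 0 ≤ s → s ≤ u → u ≤ t → t ≤ T →
      X n s t = ∑ k ∈ Finset.range (n + 1), X (n - k) s u * X k u t)
    (hXb : ∀ n, 1 ≤ n → n ≤ p → ∀ s t, 0 ≤ s → s ≤ t → t ≤ T →
      |X n s t| ≤ CX * (t - s) ^ ((n : ℝ) * γ))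
    (Y : ℕ → ℝ → ℝ) (M : ℝ) (Ys : ℕ → ℝ → ℝ → ℝ)
    (hYs : ∀ k s t, Ys k s t = Y k t - ∑ n ∈ Finset.Icc k (p - 1), Y n s * X (n - k) s t)
    (hYb : ∀ k, k ≤ p - 1 → ∀ s t, 0 ≤ s → s ≤ t → t ≤ T →
      |Ys k s t| ≤ M * (t - s) ^ (((p : ℝ) - k) * γ))
    (Ξ : ℝ → ℝ → ℝ)
    (hΞ : ∀ s t, Ξ s t = ∑ n ∈ Finset.Icc 1 p, Y (n - 1) s * X n s t) :
    (∀ s u t, 0 ≤ s → s ≤ u → u ≤ t → t ≤ T →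
      Ξ s t - Ξ s u - Ξ u t = -∑ k ∈ Finset.Icc 1 p, Ys (k - 1) s u * X k u t) ∧
    ∃ C : ℝ, ∀ s u t, 0 ≤ s → s ≤ u → u ≤ t → t ≤ T →
      |Ξ s t - Ξ s u - Ξ u t| ≤ C * (t - s) ^ (((p : ℝ) + 1) * γ) := by
  obtain rfl : Ξ = germ p Y X := funext₂ hΞ
  obtain rfl : Ys = remainder p Y X := funext₃ hYs
  have hδ : ∀ s u t, 0 ≤ s → s ≤ u → u ≤ t → t ≤ T → germ p Y X s t - germ p Y X s u -
      germ p Y X u t = -∑ k ∈ Icc 1 p, remainder p Y X (k - 1) s u * X k u t :=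
    fun s u t hs hsu hut htT =>
      germ_sub_germ_sub_germ (hX0 u t) fun n hn => hChen n hn s u t hs hsu hut htT
  refine ⟨hδ, p * (|M| * |CX|), fun s u t hs hsu hut htT => ?_⟩
  rw [hδ s u t hs hsu hut htT, abs_neg]
  exact abs_sum_mul_le_rpow (A := (remainder p Y X · s u)) (B := (X · u t)) hγ.1.le hsu hut
    (fun k hk => hYb (k - 1) (by have := mem_Icc.1 hk; omega) s u hs hsu (hut.trans htT))
    (fun k hk => hXb k (mem_Icc.1 hk).1 (mem_Icc.1 hk).2 u t (hs.trans hsu) hut htT)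

/-- For a controlled path `Y` and a `γ`-rough path `X` with `Ξ_{s,t} = ∑_{n=1}^p Y^(n-1)_s X^(n)_{s,t}`:
`δΞ_{s,u,t} = -∑_{k=1}^p Y^(k-1)♯_{s,u} X^(k)_{u,t}` and consequently
`|δΞ_{s,u,t}| ≤ C |t-s|^{(p+1)γ}`. -/
theorem stmt3 (T γ : ℝ) (hT : 0 < T) (hγ : γ ∈ Set.Ioo (0:ℝ) 1)
    (p : ℕ) (hp : p = ⌊1/γ⌋₊)
    (X : ℕ → ℝ → ℝ → ℝ) (CX : ℝ)
    (hX0 : ∀ s t, X 0 s t = 1)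
    (hChen : ∀ n, n ≤ p → ∀ s u t, 0 ≤ s → s ≤ u → u ≤ t → t ≤ T →
      X n s t = ∑ k ∈ Finset.range (n + 1), X (n - k) s u * X k u t)
    (hXb : ∀ n, 1 ≤ n → n ≤ p → ∀ s t, 0 ≤ s → s ≤ t → t ≤ T →
      |X n s t| ≤ CX * (t - s) ^ ((n : ℝ) * γ))
    (Y : ℕ → ℝ → ℝ) (M : ℝ) (Ys : ℕ → ℝ → ℝ → ℝ)
    (hYs : ∀ k s t, Ys k s t = Y k t - ∑ n ∈ Finset.Icc k (p - 1), Y n s * X (n - k) s t)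
    (hYb : ∀ k, k ≤ p - 1 → ∀ s t, 0 ≤ s → s ≤ t → t ≤ T →
      |Ys k s t| ≤ M * (t - s) ^ (((p : ℝ) - k) * γ))
    (Ξ : ℝ → ℝ → ℝ)
    (hΞ : ∀ s t, Ξ s t = ∑ n ∈ Finset.Icc 1 p, Y (n - 1) s * X n s t) :
    (∀ s u t, 0 ≤ s → s ≤ u → u ≤ t → t ≤ T →
      Ξ s t - Ξ s u - Ξ u t = -∑ k ∈ Finset.Icc 1 p, Ys (k - 1) s u * X k u t) ∧
    ∃ C : ℝ, ∀ s u t, 0 ≤ s → s ≤ u → u ≤ t → t ≤ T →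
      |Ξ s t - Ξ s u - Ξ u t| ≤ C * (t - s) ^ (((p : ℝ) + 1) * γ) :=
  stmt3_general T γ hγ p X CX hX0 hChen hXb Y M Ys hYs hYb Ξ hΞ
end

section
/- Local Lipschitz estimate for the rough integrand map: let X, X̃ be γ-rough paths and Y, Ỹ controlled paths (by X, X̃ respectively), all with norms and initial values bounded by M. Set Ξ_{s,t} := ∑_{n=1}^p Y^(n−1)_s X^(n)_{s,t} and Ξ̃ analogously. Then ‖δ(Ξ − Ξ̃)‖_{(p+1)γ} ≤ M(ρ_γ(X, X̃) + ‖Y; Ỹ‖_{X,X̃}), where ρ_γ(X,X̃) := ∑_{n=1}^p sup_{s<t} |X^(n)_{s,t} − X̃^(n)_{s,t}|/|t−s|^{nγ} and ‖Y; Ỹ‖_{X,X̃} := ∑_{k=0}^{p−1} ‖Y^(k)♯ − Ỹ^(k)♯‖_{(p−k)γ}. -/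
/-!
Chen's relation turns the second-order increment of the germ
`Ξ_{s,t} = ∑_{n=1}^p Y^(n-1)_s X^(n)_{s,t}` into the exact identity
`δΞ_{s,u,t} = -∑_{k<p} Y^(k)♯_{s,u} X^(k+1)_{u,t}`. The difference of two such sums is split term by
term as `(Y♯ - Ỹ♯) X + Ỹ♯ (X - X̃)`; each product carries the Hölder exponent
`(p - k)γ + (k + 1)γ = (p + 1)γ`.
-/

open Finset

lemma sum_Icc_one_eq_sum_range_succ {M : Type*} [AddCommMonoid M] (p : ℕ) (f : ℕ → M) :
    ∑ n ∈ Icc 1 p, f n = ∑ i ∈ range p, f (i + 1) := by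
  rw [← Ico_add_one_right_eq_Icc, sum_Ico_eq_sum_range]
  simp [add_comm]

section Germ

variable {R : Type*} [CommRing R] (p : ℕ) (Y : ℕ → ℝ → R) (X : ℕ → ℝ → ℝ → R)

def integrandGerm (s t : ℝ) : R :=
  ∑ n ∈ Icc 1 p, Y (n - 1) s * X n s t

def controlledRemainder (k : ℕ) (s t : ℝ) : R :=
  Y k t - ∑ n ∈ Icc k (p - 1), Y n s * X (n - k) s t

theorem integrandGerm_delta {s u t : ℝ} (hX0 : X 0 u t = 1)
    (hChen : ∀ n ≤ p, X n s t = ∑ k ∈ range (n + 1), X (n - k) s u * X k u t) :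
    integrandGerm p Y X s t - integrandGerm p Y X s u - integrandGerm p Y X u t =
      -∑ k ∈ range p, controlledRemainder p Y X k s u * X (k + 1) u t := by
  simp only [integrandGerm, controlledRemainder, sum_Icc_one_eq_sum_range_succ,
    Nat.add_sub_cancel]
  have hChen_split : ∀ i ∈ range p, Y i s * X (i + 1) s t =
      Y i s * X (i + 1) s u + ∑ k ∈ range (i + 1), Y i s * X (i - k) s u * X (k + 1) u t := by
    intro i hi
    rw [hChen (i + 1) (mem_range.1 hi), sum_range_succ', mul_add, mul_sum]
    simp only [Nat.add_sub_add_right, Nat.sub_zero, hX0, mul_one, mul_assoc, add_comm]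
  have hswap : ∑ i ∈ range p, ∑ k ∈ range (i + 1), Y i s * X (i - k) s u * X (k + 1) u t =
      ∑ k ∈ range p, (∑ i ∈ Icc k (p - 1), Y i s * X (i - k) s u) * X (k + 1) u t := by
    simp only [sum_mul]
    refine sum_comm' fun i k => ?_
    simp only [mem_range, mem_Icc]
    omega
  rw [sum_congr rfl hChen_split, sum_add_distrib, hswap]
  simp only [sub_mul, sum_sub_distrib]
  ring

end Germ

lemma nonneg_of_abs_le_mul_rpow {x c h e : ℝ} (hh : 0 < h) (hx : |x| ≤ c * h ^ e) : 0 ≤ c :=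
  nonneg_of_mul_nonneg_left ((abs_nonneg x).trans hx) (Real.rpow_pos_of_pos hh e)

lemma abs_mul_le_of_holder {x y c c' α β s u t : ℝ} (hsu : s ≤ u) (hut : u ≤ t)
    (hα : 0 ≤ α) (hβ : 0 ≤ β) (hc : 0 ≤ c) (hc' : 0 ≤ c')
    (hx : |x| ≤ c * (u - s) ^ α) (hy : |y| ≤ c' * (t - u) ^ β) :
    |x * y| ≤ c * c' * (t - s) ^ (α + β) := by
  have hts : 0 ≤ t - s := by linarith
  have hus : (u - s) ^ α ≤ (t - s) ^ α := Real.rpow_le_rpow (by linarith) (by linarith) hα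
  have htu : (t - u) ^ β ≤ (t - s) ^ β := Real.rpow_le_rpow (by linarith) (by linarith) hβ
  calc |x * y| = |x| * |y| := abs_mul x y
    _ ≤ (c * (u - s) ^ α) * (c' * (t - u) ^ β) :=
      mul_le_mul hx hy (abs_nonneg y) ((abs_nonneg x).trans hx)
    _ ≤ (c * (t - s) ^ α) * (c' * (t - s) ^ β) := by
      gcongr
    _ = c * c' * (t - s) ^ (α + β) := by
      rw [Real.rpow_add_of_nonneg hts hα hβ]; ring

lemma abs_mul_sub_mul_le_of_holder {a a' b b' d ρ M α β s u t : ℝ} (hsu : s ≤ u) (hut : u ≤ t)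
    (hα : 0 ≤ α) (hβ : 0 ≤ β) (hd : 0 ≤ d) (hρ : 0 ≤ ρ) (hM : 0 ≤ M)
    (ha : |a - a'| ≤ d * (u - s) ^ α) (ha' : |a'| ≤ M * (u - s) ^ α)
    (hb : |b| ≤ M * (t - u) ^ β) (hbb' : |b - b'| ≤ ρ * (t - u) ^ β) :
    |a' * b' - a * b| ≤ (M * d + M * ρ) * (t - s) ^ (α + β) := by
  have hsplit : a' * b' - a * b = -((a - a') * b + a' * (b - b')) := by ring
  rw [hsplit, abs_neg]
  calc |(a - a') * b + a' * (b - b')| ≤ |(a - a') * b| + |a' * (b - b')| := abs_add_le _ _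
    _ ≤ d * M * (t - s) ^ (α + β) + M * ρ * (t - s) ^ (α + β) :=
      add_le_add (abs_mul_le_of_holder hsu hut hα hβ hd hM ha hb)
        (abs_mul_le_of_holder hsu hut hα hβ hM hρ ha' hbb')
    _ = (M * d + M * ρ) * (t - s) ^ (α + β) := by ring

theorem stmt18_general (T γ : ℝ) (hT : 0 < T) (hγ : γ ∈ Set.Ioo (0:ℝ) (1/2))
    (p : ℕ)
    (M : ℝ) (hM : 0 ≤ M)
    (X Xt : ℕ → ℝ → ℝ → ℝ)
    (hX0 : ∀ s t, X 0 s t = 1) (hXt0 : ∀ s t, Xt 0 s t = 1)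
    (hChen : ∀ n, n ≤ p → ∀ s u t, 0 ≤ s → s ≤ u → u ≤ t → t ≤ T →
      X n s t = ∑ k ∈ Finset.range (n + 1), X (n - k) s u * X k u t)
    (hChent : ∀ n, n ≤ p → ∀ s u t, 0 ≤ s → s ≤ u → u ≤ t → t ≤ T →
      Xt n s t = ∑ k ∈ Finset.range (n + 1), Xt (n - k) s u * Xt k u t)
    (hXb : ∀ n, 1 ≤ n → n ≤ p → ∀ s t, 0 ≤ s → s ≤ t → t ≤ T →
      |X n s t| ≤ M * (t - s) ^ ((n : ℝ) * γ))
    (Y Yt : ℕ → ℝ → ℝ) (Ys Yts : ℕ → ℝ → ℝ → ℝ)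
    (hYs : ∀ k s t, Ys k s t = Y k t - ∑ n ∈ Finset.Icc k (p - 1), Y n s * X (n - k) s t)
    (hYts : ∀ k s t, Yts k s t = Yt k t - ∑ n ∈ Finset.Icc k (p - 1), Yt n s * Xt (n - k) s t)
    (hYtb : ∀ k, k ≤ p - 1 → ∀ s t, 0 ≤ s → s ≤ t → t ≤ T →
      |Yts k s t| ≤ M * (t - s) ^ (((p : ℝ) - k) * γ))
    (ρn : ℕ → ℝ)
    (hρ : ∀ n, 1 ≤ n → n ≤ p → ∀ s t, 0 ≤ s → s ≤ t → t ≤ T →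
      |X n s t - Xt n s t| ≤ ρn n * (t - s) ^ ((n : ℝ) * γ))
    (dn : ℕ → ℝ)
    (hd : ∀ k, k ≤ p - 1 → ∀ s t, 0 ≤ s → s ≤ t → t ≤ T →
      |Ys k s t - Yts k s t| ≤ dn k * (t - s) ^ (((p : ℝ) - k) * γ))
    (Ξ Ξt : ℝ → ℝ → ℝ)
    (hΞ : ∀ s t, Ξ s t = ∑ n ∈ Finset.Icc 1 p, Y (n - 1) s * X n s t)
    (hΞt : ∀ s t, Ξt s t = ∑ n ∈ Finset.Icc 1 p, Yt (n - 1) s * Xt n s t) :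
    ∀ s u t, 0 ≤ s → s ≤ u → u ≤ t → t ≤ T →
      |(Ξ s t - Ξ s u - Ξ u t) - (Ξt s t - Ξt s u - Ξt u t)| ≤
        M * ((∑ n ∈ Finset.Icc 1 p, ρn n) + (∑ k ∈ Finset.range p, dn k)) *
          (t - s) ^ (((p : ℝ) + 1) * γ) := by
  intro s u t h0s hsu hut htT
  have hΞ_eq : Ξ = integrandGerm p Y X := funext₂ hΞ
  have hΞt_eq : Ξt = integrandGerm p Yt Xt := funext₂ hΞt
  have hYs_eq : Ys = controlledRemainder p Y X := funext₃ hYs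
  have hYts_eq : Yts = controlledRemainder p Yt Xt := funext₃ hYts
  subst hΞ_eq hΞt_eq hYs_eq hYts_eq
  rw [integrandGerm_delta p Y X (hX0 u t) fun n hn => hChen n hn s u t h0s hsu hut htT,
    integrandGerm_delta p Yt Xt (hXt0 u t) fun n hn => hChent n hn s u t h0s hsu hut htT,
    neg_sub_neg, ← sum_sub_distrib]
  have hd0 : ∀ k < p, 0 ≤ dn k := fun k hk =>
    nonneg_of_abs_le_mul_rpow (sub_pos.2 hT) (hd k (by omega) 0 T le_rfl hT.le le_rfl)
  have hρ0 : ∀ k < p, 0 ≤ ρn (k + 1) := fun k hk =>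
    nonneg_of_abs_le_mul_rpow (sub_pos.2 hT) (hρ (k + 1) (by omega) hk 0 T le_rfl hT.le le_rfl)
  have hterm : ∀ k ∈ range p,
      |controlledRemainder p Yt Xt k s u * Xt (k + 1) u t -
          controlledRemainder p Y X k s u * X (k + 1) u t|
        ≤ (M * dn k + M * ρn (k + 1)) * (t - s) ^ (((p : ℝ) + 1) * γ) := by
    intro k hk
    have hkp : k < p := mem_range.1 hk
    have hexp : ((p : ℝ) - k) * γ + ((k + 1 : ℕ) : ℝ) * γ = ((p : ℝ) + 1) * γ := by
      push_cast; ring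
    have hexp_nonneg : 0 ≤ ((p : ℝ) - k) * γ :=
      mul_nonneg (sub_nonneg.2 (by exact_mod_cast hkp.le)) hγ.1.le
    rw [← hexp]
    exact abs_mul_sub_mul_le_of_holder hsu hut hexp_nonneg
      (mul_nonneg (Nat.cast_nonneg _) hγ.1.le) (hd0 k hkp)
      (hρ0 k hkp) hM (hd k (by omega) s u h0s hsu (hut.trans htT))
      (hYtb k (by omega) s u h0s hsu (hut.trans htT))
      (hXb (k + 1) (by omega) hkp u t (h0s.trans hsu) hut htT)
      (hρ (k + 1) (by omega) hkp u t (h0s.trans hsu) hut htT)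
  calc _ ≤ _ := abs_sum_le_sum_abs _ _
    _ ≤ _ := sum_le_sum hterm
    _ = _ := by
      rw [sum_Icc_one_eq_sum_range_succ, ← sum_mul, sum_add_distrib, ← mul_sum, ← mul_sum]
      ring

/-- Local Lipschitz estimate for the rough integrand map:
`‖δ(Ξ - Ξ̃)‖_{(p+1)γ} ≤ M (ρ_γ(X,X̃) + ‖Y;Ỹ‖_{X,X̃})` where
`Ξ_{s,t} = ∑_{n=1}^p Y^(n-1)_s X^(n)_{s,t}` and similarly for `Ξ̃`. -/
theorem stmt18 (T γ : ℝ) (hT : 0 < T) (hγ : γ ∈ Set.Ioo (0:ℝ) (1/2))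
    (p : ℕ) (hp : p = ⌊1/γ⌋₊)
    (M : ℝ) (hM : 0 ≤ M)
    (X Xt : ℕ → ℝ → ℝ → ℝ)
    (hX0 : ∀ s t, X 0 s t = 1) (hXt0 : ∀ s t, Xt 0 s t = 1)
    (hChen : ∀ n, n ≤ p → ∀ s u t, 0 ≤ s → s ≤ u → u ≤ t → t ≤ T →
      X n s t = ∑ k ∈ Finset.range (n + 1), X (n - k) s u * X k u t)
    (hChent : ∀ n, n ≤ p → ∀ s u t, 0 ≤ s → s ≤ u → u ≤ t → t ≤ T →
      Xt n s t = ∑ k ∈ Finset.range (n + 1), Xt (n - k) s u * Xt k u t)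
    (hXb : ∀ n, 1 ≤ n → n ≤ p → ∀ s t, 0 ≤ s → s ≤ t → t ≤ T →
      |X n s t| ≤ M * (t - s) ^ ((n : ℝ) * γ))
    (hXtb : ∀ n, 1 ≤ n → n ≤ p → ∀ s t, 0 ≤ s → s ≤ t → t ≤ T →
      |Xt n s t| ≤ M * (t - s) ^ ((n : ℝ) * γ))
    (Y Yt : ℕ → ℝ → ℝ) (Ys Yts : ℕ → ℝ → ℝ → ℝ)
    (hYs : ∀ k s t, Ys k s t = Y k t - ∑ n ∈ Finset.Icc k (p - 1), Y n s * X (n - k) s t)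
    (hYts : ∀ k s t, Yts k s t = Yt k t - ∑ n ∈ Finset.Icc k (p - 1), Yt n s * Xt (n - k) s t)
    (hYb : ∀ k, k ≤ p - 1 → ∀ s t, 0 ≤ s → s ≤ t → t ≤ T →
      |Ys k s t| ≤ M * (t - s) ^ (((p : ℝ) - k) * γ))
    (hYtb : ∀ k, k ≤ p - 1 → ∀ s t, 0 ≤ s → s ≤ t → t ≤ T →
      |Yts k s t| ≤ M * (t - s) ^ (((p : ℝ) - k) * γ))
    (ρn : ℕ → ℝ)
    (hρ : ∀ n, 1 ≤ n → n ≤ p → ∀ s t, 0 ≤ s → s ≤ t → t ≤ T →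
      |X n s t - Xt n s t| ≤ ρn n * (t - s) ^ ((n : ℝ) * γ))
    (dn : ℕ → ℝ)
    (hd : ∀ k, k ≤ p - 1 → ∀ s t, 0 ≤ s → s ≤ t → t ≤ T →
      |Ys k s t - Yts k s t| ≤ dn k * (t - s) ^ (((p : ℝ) - k) * γ))
    (Ξ Ξt : ℝ → ℝ → ℝ)
    (hΞ : ∀ s t, Ξ s t = ∑ n ∈ Finset.Icc 1 p, Y (n - 1) s * X n s t)
    (hΞt : ∀ s t, Ξt s t = ∑ n ∈ Finset.Icc 1 p, Yt (n - 1) s * Xt n s t) :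
    ∀ s u t, 0 ≤ s → s ≤ u → u ≤ t → t ≤ T →
      |(Ξ s t - Ξ s u - Ξ u t) - (Ξt s t - Ξt s u - Ξt u t)| ≤
        M * ((∑ n ∈ Finset.Icc 1 p, ρn n) + (∑ k ∈ Finset.range p, dn k)) *
          (t - s) ^ (((p : ℝ) + 1) * γ) :=
  stmt18_general T γ hT hγ p M hM X Xt hX0 hXt0 hChen hChent hXb Y Yt Ys Yts hYs hYts hYtb ρn hρ dn
    hd Ξ Ξt hΞ hΞt
end

section
/- Method of characteristics for the smooth transport equation: let b ∈ L^∞([0,T]; C¹_b(ℝ)), X : [0,T] → ℝ be C¹, u_0 ∈ C¹_b(ℝ), and let φ_t(·) be the C¹ flow of φ_t(x) = x + ∫_0^t b(r,φ_r(x)) dr + X_t, which is a bijection of ℝ for each t with C¹ inverse. Then u(t,x) := u_0(φ_t^{−1}(x)) satisfies the transport equation ∂_t u(t,x) + b(t,x) ∂_x u(t,x) + ∂_x u(t,x) Ẋ_t = 0 with u(0,x) = u_0(x), for all (t,x) ∈ (0,T] × ℝ. -/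
/-!
For `w ≠ y` the difference `φ_s w - φ_s y` solves the scalar linear ODE `q' = a q` whose
coefficient `a(s)` is a difference quotient of `b(s, ·)`, so it equals `(w - y) exp ∫₀ˢ a`.
Letting `w → y` under dominated convergence gives `∂ₓφ_s(y) = exp ∫₀ˢ ∂ₓb(r, φ_r y) dr`, which is
positive and jointly continuous in `(s, y)`. The inverse `ψ` is jointly continuous by the
intermediate value theorem, so `∂ₓψ_t = 1 / ∂ₓφ_t ∘ ψ_t`, and the mean value theorem applied to
`φ_τ (ψ_τ x) = x` gives `∂_t ψ_t(x) = -(b(t, x) + Ẋ_t) / ∂ₓφ_t(ψ_t x)`. The transport equation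
for `u = u₀ ∘ ψ` is then the chain rule.
-/

open Filter Set Function MeasureTheory
open scoped Topology Interval

theorem exists_mem_uIcc_sub_eq_mul {f f' : ℝ → ℝ} (hf : ∀ y, HasDerivAt f (f' y) y) (a b : ℝ) :
    ∃ c ∈ [[a, b]], f b - f a = f' c * (b - a) := by
  have hcont : Continuous f := Differentiable.continuous fun y => (hf y).differentiableAt
  rcases lt_trichotomy a b with hab | rfl | hba
  · obtain ⟨c, hc, hslope⟩ := exists_hasDerivAt_eq_slope f f' hab hcont.continuousOn
      fun y _ => hf y
    refine ⟨c, Icc_subset_uIcc (Ioo_subset_Icc_self hc), ?_⟩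
    rw [hslope, div_mul_cancel₀ _ (sub_ne_zero.2 hab.ne')]
  · exact ⟨a, left_mem_uIcc, by ring⟩
  · obtain ⟨c, hc, hslope⟩ := exists_hasDerivAt_eq_slope f f' hba hcont.continuousOn
      fun y _ => hf y
    refine ⟨c, Icc_subset_uIcc' (Ioo_subset_Icc_self hc), ?_⟩
    rw [hslope, div_mul_eq_mul_div, eq_div_iff (sub_ne_zero.2 hba.ne')]
    ring

theorem abs_slope_le_of_abs_deriv_le {f f' : ℝ → ℝ} {C : ℝ} (hf : ∀ y, HasDerivAt f (f' y) y)
    (hC : ∀ y, |f' y| ≤ C) (a b : ℝ) : |slope f a b| ≤ C := by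
  obtain ⟨c, -, hc⟩ := exists_mem_uIcc_sub_eq_mul hf a b
  rcases eq_or_ne a b with rfl | hab
  · simpa using (abs_nonneg _).trans (hC a)
  · rw [slope_def_field, hc, mul_div_cancel_right₀ _ (sub_ne_zero.2 hab.symm)]
    exact hC c

theorem continuous_slope_of_ne {b : ℝ → ℝ → ℝ} (hb : Continuous (uncurry b)) {p q : ℝ → ℝ}
    (hp : Continuous p) (hq : Continuous q) (hne : ∀ r, p r ≠ q r) :
    Continuous fun r => slope (b r) (p r) (q r) := by
  simp only [slope_def_field]
  exact ((hb.comp (continuous_id.prodMk hq)).sub (hb.comp (continuous_id.prodMk hp))).div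
    (hq.sub hp) fun r => sub_ne_zero.2 (hne r).symm

theorem eq_mul_exp_integral_of_hasDerivAt {a q : ℝ → ℝ} (ha : Continuous a)
    (hq : ∀ s, HasDerivAt q (a s * q s) s) (s : ℝ) :
    q s = q 0 * Real.exp (∫ r in (0 : ℝ)..s, a r) := by
  set A : ℝ → ℝ := fun s => ∫ r in (0 : ℝ)..s, a r
  have hA : ∀ s, HasDerivAt A (a s) s := fun s => (ha.integral_hasStrictDerivAt 0 s).hasDerivAt
  have hg : ∀ s, HasDerivAt (fun s => q s * Real.exp (-A s)) 0 s := fun s => by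
    have h : HasDerivAt (fun s => q s * Real.exp (-A s))
        (a s * q s * Real.exp (-A s) + q s * (Real.exp (-A s) * -a s)) s :=
      (hq s).mul (hA s).neg.exp
    convert h using 1
    ring
  have hconst := is_const_of_deriv_eq_zero (fun s => (hg s).differentiableAt)
    (fun s => (hg s).deriv) s 0
  simp only [A, intervalIntegral.integral_same, neg_zero, Real.exp_zero, mul_one] at hconst
  rw [← hconst, mul_assoc, ← Real.exp_add, neg_add_cancel, Real.exp_zero, mul_one]

theorem hasDerivAt_flow_time {b : ℝ → ℝ → ℝ} {X : ℝ → ℝ} {φ : ℝ → ℝ → ℝ}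
    (hb : Continuous (uncurry b)) (hφ : Continuous (uncurry φ)) (hX : Differentiable ℝ X)
    (hflow : ∀ t x, φ t x = x + (∫ r in (0 : ℝ)..t, b r (φ r x)) + X t) (y s : ℝ) :
    HasDerivAt (fun τ => φ τ y) (b s (φ s y) + deriv X s) s := by
  have hbφ : Continuous fun r => b r (φ r y) :=
    hb.comp (continuous_id.prodMk (hφ.comp (continuous_id.prodMk continuous_const)))
  rw [show (fun τ => φ τ y) = fun τ => y + (∫ r in (0 : ℝ)..τ, b r (φ r y)) + X τ from
    funext fun τ => hflow τ y]
  exact ((hbφ.integral_hasStrictDerivAt 0 s).hasDerivAt.const_add y).add (hX s).hasDerivAt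

theorem slope_flow_eq_exp_integral {b : ℝ → ℝ → ℝ} {c : ℝ → ℝ} {φ : ℝ → ℝ → ℝ}
    (hb : Continuous (uncurry b))
    (hφt : ∀ y s, HasDerivAt (fun τ => φ τ y) (b s (φ s y) + c s) s)
    (hφ0 : ∀ y, φ 0 y = y) (hinj : ∀ r, Injective (φ r)) {y w : ℝ} (hw : w ≠ y) (s : ℝ) :
    slope (φ s) y w = Real.exp (∫ r in (0 : ℝ)..s, slope (b r) (φ r y) (φ r w)) := by
  have hcont : ∀ y, Continuous fun τ => φ τ y := fun y =>
    Differentiable.continuous fun s => (hφt y s).differentiableAt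
  have ha := continuous_slope_of_ne hb (hcont y) (hcont w) fun r => (hinj r).ne hw.symm
  have hq : ∀ s, HasDerivAt (fun τ => φ τ w - φ τ y)
      (slope (b s) (φ s y) (φ s w) * (φ s w - φ s y)) s := fun s => by
    refine ((hφt w s).sub (hφt y s)).congr_deriv ?_
    rw [mul_comm, ← smul_eq_mul, sub_smul_slope, vsub_eq_sub]
    ring
  rw [slope_def_field, eq_mul_exp_integral_of_hasDerivAt ha hq s, hφ0, hφ0,
    mul_div_cancel_left₀ _ (sub_ne_zero.2 hw)]

theorem hasDerivAt_flow_space {b bx : ℝ → ℝ → ℝ} {c : ℝ → ℝ} {φ : ℝ → ℝ → ℝ} {C : ℝ}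
    (hb : Continuous (uncurry b)) (hbx : ∀ r p, HasDerivAt (b r) (bx r p) p)
    (hbxC : ∀ r p, |bx r p| ≤ C) (hφx : ∀ r, Continuous (φ r))
    (hφt : ∀ y s, HasDerivAt (fun τ => φ τ y) (b s (φ s y) + c s) s)
    (hφ0 : ∀ y, φ 0 y = y) (hinj : ∀ r, Injective (φ r)) (s y : ℝ) :
    HasDerivAt (φ s) (Real.exp (∫ r in (0 : ℝ)..s, bx r (φ r y))) y := by
  have hcont : ∀ y, Continuous fun τ => φ τ y := fun y =>
    Differentiable.continuous fun s => (hφt y s).differentiableAt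
  have hnear : ∀ r, Tendsto (φ r) (𝓝[≠] y) (𝓝[≠] (φ r y)) := fun r =>
    tendsto_nhdsWithin_iff.2 ⟨((hφx r).tendsto y).mono_left nhdsWithin_le_nhds,
      eventually_nhdsWithin_of_forall fun w hw => (hinj r).ne hw⟩
  have hint : Tendsto (fun w => ∫ r in (0 : ℝ)..s, slope (b r) (φ r y) (φ r w)) (𝓝[≠] y)
      (𝓝 (∫ r in (0 : ℝ)..s, bx r (φ r y))) := by
    refine intervalIntegral.tendsto_integral_filter_of_dominated_convergence (fun _ => C)
      (eventually_nhdsWithin_of_forall fun w hw => ?_)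
      (Eventually.of_forall fun w => ae_of_all _ fun r _ =>
        abs_slope_le_of_abs_deriv_le (hbx r) (hbxC r) _ _)
      intervalIntegrable_const
      (ae_of_all _ fun r _ => (hasDerivAt_iff_tendsto_slope.1 (hbx r (φ r y))).comp (hnear r))
    exact (continuous_slope_of_ne hb (hcont y) (hcont w)
      fun r => (hinj r).ne (Ne.symm hw)).aestronglyMeasurable
  rw [hasDerivAt_iff_tendsto_slope]
  refine ((Real.continuous_exp.tendsto _).comp hint).congr' ?_
  filter_upwards [self_mem_nhdsWithin] with w hw
  exact (slope_flow_eq_exp_integral hb hφt hφ0 hinj hw s).symm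

theorem continuousAt_uncurry_of_leftInverse {φ ψ : ℝ → ℝ → ℝ} (hφ : Continuous (uncurry φ))
    (hinv : ∀ τ, LeftInverse (ψ τ) (φ τ)) {t x : ℝ} (hx : φ t (ψ t x) = x) :
    ContinuousAt (uncurry ψ) (t, x) := by
  have hφx : ∀ τ, Continuous (φ τ) := fun τ => hφ.comp (continuous_const.prodMk continuous_id)
  set z := ψ t x
  refine Metric.tendsto_nhds.2 fun ε hε => ?_
  set c := z - ε / 2 with hc
  set d := z + ε / 2 with hd
  -- `x` lies strictly between `φ t c` and `φ t d`, an open condition in `(τ, w)`.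
  have hsep : (φ t c - x) * (φ t d - x) < 0 := by
    have hcz : c < z := by linarith
    have hzd : z < d := by linarith
    rcases (hφx t).strictMono_of_inj (hinv t).injective with hmono | hanti
    · exact mul_neg_of_neg_of_pos (by linarith [hmono hcz]) (by linarith [hmono hzd])
    · exact mul_neg_of_pos_of_neg (by linarith [hanti hcz]) (by linarith [hanti hzd])
  have hsep_cont : ContinuousAt (fun p : ℝ × ℝ => (φ p.1 c - p.2) * (φ p.1 d - p.2)) (t, x) := by
    fun_prop
  filter_upwards [hsep_cont.eventually (gt_mem_nhds hsep)] with ⟨τ, w⟩ hτw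
  have hw : w ∈ [[φ τ c, φ τ d]] := by
    rcases mul_neg_iff.1 hτw with ⟨h1, h2⟩ | ⟨h1, h2⟩
    · exact mem_uIcc.2 (Or.inr ⟨by linarith, by linarith⟩)
    · exact mem_uIcc.2 (Or.inl ⟨by linarith, by linarith⟩)
  obtain ⟨y, hy, rfl⟩ := intermediate_value_uIcc (hφx τ).continuousOn hw
  simp only [uncurry_apply_pair]
  rw [uIcc_of_lt (by linarith)] at hy
  rw [hinv τ y, Real.dist_eq]
  exact abs_sub_lt_iff.2 ⟨by linarith [hy.2], by linarith [hy.1]⟩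

theorem hasDerivAt_implicit {φ ψ J : ℝ → ℝ → ℝ} {t x v : ℝ}
    (hφ : ∀ τ y, HasDerivAt (φ τ) (J τ y) y) (hJ : ContinuousAt (uncurry J) (t, ψ t x))
    (hJ0 : J t (ψ t x) ≠ 0) (hψ : ContinuousAt (fun τ => ψ τ x) t)
    (hinv : ∀ τ, φ τ (ψ τ x) = x) (hv : HasDerivAt (fun τ => φ τ (ψ t x)) v t) :
    HasDerivAt (fun τ => ψ τ x) (-v / J t (ψ t x)) t := by
  set z := ψ t x
  choose ξ hξ hmvt using fun τ => exists_mem_uIcc_sub_eq_mul (hφ τ) z (ψ τ x)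
  have hξt : Tendsto ξ (𝓝 t) (𝓝 z) := by
    refine tendsto_iff_dist_tendsto_zero.2 (squeeze_zero (fun _ => dist_nonneg)
      (fun τ => ?_) (tendsto_iff_dist_tendsto_zero.1 hψ))
    rw [Real.dist_eq, Real.dist_eq]
    exact abs_sub_left_of_mem_uIcc (hξ τ)
  have hJξ : Tendsto (fun τ => J τ (ξ τ)) (𝓝 t) (𝓝 (J t z)) :=
    hJ.tendsto.comp (tendsto_id.prodMk_nhds hξt)
  rw [hasDerivAt_iff_tendsto_slope]
  refine ((hasDerivAt_iff_tendsto_slope.1 hv).neg.div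
    (hJξ.mono_left nhdsWithin_le_nhds) hJ0).congr' ?_
  filter_upwards [(hJξ.eventually_ne hJ0).filter_mono nhdsWithin_le_nhds,
    self_mem_nhdsWithin] with τ hJτ hτ
  have h : φ t z - φ τ z = J τ (ξ τ) * (ψ τ x - z) := by rw [hinv t, ← hmvt τ, hinv τ]
  rw [Pi.div_apply, slope_def_field, slope_def_field]
  field_simp [sub_ne_zero.2 hτ]
  linear_combination h

theorem stmt19_general (T : ℝ)
    (b bx : ℝ → ℝ → ℝ) (Cbx : ℝ)
    (hbcont : Continuous (Function.uncurry b))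
    (hbxcont : Continuous (Function.uncurry bx))
    (hbderiv : ∀ r y, HasDerivAt (fun z => b r z) (bx r y) y)
    (hbxbdd : ∀ r y, |bx r y| ≤ Cbx)
    (X : ℝ → ℝ) (hX : ContDiff ℝ 1 X) (hX0 : X 0 = 0)
    (u0 : ℝ → ℝ) (hu0 : ContDiff ℝ 1 u0)
    (φ ψ : ℝ → ℝ → ℝ)
    (hφcont : Continuous (Function.uncurry φ))
    (hflow : ∀ t x, φ t x = x + (∫ r in (0:ℝ)..t, b r (φ r x)) + X t)
    (hinv1 : ∀ t, Function.LeftInverse (ψ t) (φ t))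
    (hinv2 : ∀ t, Function.RightInverse (ψ t) (φ t)) :
    (∀ x, u0 (ψ 0 x) = u0 x) ∧
    ∀ t ∈ Set.Ioc (0:ℝ) T, ∀ x : ℝ,
      ∃ ut ux : ℝ,
        HasDerivAt (fun τ => u0 (ψ τ x)) ut t ∧
        HasDerivAt (fun y => u0 (ψ t y)) ux x ∧
        ut + b t x * ux + ux * deriv X t = 0 := by
  have hφ0 : ∀ y, φ 0 y = y := fun y => by
    rw [hflow, intervalIntegral.integral_same, hX0, add_zero, add_zero]
  have hφt := hasDerivAt_flow_time hbcont hφcont (hX.differentiable one_ne_zero) hflow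
  set J : ℝ → ℝ → ℝ := fun s y => Real.exp (∫ r in (0 : ℝ)..s, bx r (φ r y))
  have hJ : ∀ s y, HasDerivAt (φ s) (J s y) y :=
    hasDerivAt_flow_space hbcont hbderiv hbxbdd
      (fun r => hφcont.comp (continuous_const.prodMk continuous_id)) hφt hφ0
      fun r => (hinv1 r).injective
  have hJcont : Continuous (uncurry J) :=
    Real.continuous_exp.comp <|
      intervalIntegral.continuous_parametric_intervalIntegral_of_continuous
        (f := fun p r => bx r (φ r p.2)) (by fun_prop) continuous_fst
  refine ⟨fun x => by rw [← hφ0 x, hinv1 0 x, hφ0], fun t _ x => ?_⟩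
  set z := ψ t x
  have hz : φ t z = x := hinv2 t x
  have hψc := continuousAt_uncurry_of_leftInverse hφcont hinv1 hz
  have hψτ : ContinuousAt (fun τ => ψ τ x) t := hψc.comp (f := fun τ => (τ, x)) (by fun_prop)
  have hψy : ContinuousAt (ψ t) x := hψc.comp (f := fun y => (t, y)) (by fun_prop)
  have hψt : HasDerivAt (fun τ => ψ τ x) (-(b t x + deriv X t) / J t z) t := by
    have := hasDerivAt_implicit hJ hJcont.continuousAt (Real.exp_pos _).ne'
      hψτ (fun τ => hinv2 τ x)
      (hφt z t)
    rwa [hz] at this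
  have hψx : HasDerivAt (ψ t) (J t z)⁻¹ x :=
    HasDerivAt.of_local_left_inverse hψy (hJ t z) (Real.exp_pos _).ne'
      (Eventually.of_forall (hinv2 t))
  have hu : HasDerivAt u0 (deriv u0 z) z := (hu0.differentiable one_ne_zero z).hasDerivAt
  refine ⟨_, _, hu.comp t hψt, hu.comp x hψx, ?_⟩
  field_simp
  ring

/-- Method of characteristics for the smooth transport equation: `u(t,x) := u₀(φ_t⁻¹(x))`
solves `∂_t u + b ∂_x u + ∂_x u Ẋ = 0`, `u(0,·) = u₀`, where `φ` is the flow of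
`φ_t(x) = x + ∫_0^t b(r,φ_r(x)) dr + X_t`. -/
theorem stmt19 (T : ℝ) (hT : 0 < T)
    (b bx : ℝ → ℝ → ℝ) (Cb Cbx : ℝ)
    (hbcont : Continuous (Function.uncurry b))
    (hbxcont : Continuous (Function.uncurry bx))
    (hbderiv : ∀ r y, HasDerivAt (fun z => b r z) (bx r y) y)
    (hbbdd : ∀ r y, |b r y| ≤ Cb) (hbxbdd : ∀ r y, |bx r y| ≤ Cbx)
    (X : ℝ → ℝ) (hX : ContDiff ℝ 1 X) (hX0 : X 0 = 0)
    (u0 : ℝ → ℝ) (hu0 : ContDiff ℝ 1 u0) (Cu : ℝ)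
    (hu0b : ∀ z, |u0 z| ≤ Cu ∧ |deriv u0 z| ≤ Cu)
    (φ ψ : ℝ → ℝ → ℝ)
    (hφcont : Continuous (Function.uncurry φ))
    (hflow : ∀ t x, φ t x = x + (∫ r in (0:ℝ)..t, b r (φ r x)) + X t)
    (hφC1 : ∀ t, ContDiff ℝ 1 (φ t))
    (hψC1 : ∀ t, ContDiff ℝ 1 (ψ t))
    (hinv1 : ∀ t, Function.LeftInverse (ψ t) (φ t))
    (hinv2 : ∀ t, Function.RightInverse (ψ t) (φ t)) :
    (∀ x, u0 (ψ 0 x) = u0 x) ∧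
    ∀ t ∈ Set.Ioc (0:ℝ) T, ∀ x : ℝ,
      ∃ ut ux : ℝ,
        HasDerivAt (fun τ => u0 (ψ τ x)) ut t ∧
        HasDerivAt (fun y => u0 (ψ t y)) ux x ∧
        ut + b t x * ux + ux * deriv X t = 0 :=
  stmt19_general T b bx Cbx hbcont hbxcont hbderiv hbxbdd X hX hX0 u0 hu0 φ ψ hφcont hflow hinv1
    hinv2
end
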